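/- arXiv:1704.06087 — 7 statements merged into one kernel-verified Lean document; each statement's English description precedes it below -/
import Mathlib

section
/- Let g, b > 0, α > 1, and let u₀ : ℝ → ℝ be a smooth, compactly supported function on (0,∞). Then the function u(t,x) = e^{-(b+g)t} ∑_{k=0}^∞ u₀(α^k x e^{-gt}) (bα²t)^k / k! is well-defined (the series converges) for all t ≥ 0 and x > 0, and satisfies the growth-fragmentation equation ∂ₜ u(t,x) + ∂ₓ(g x u(t,x)) + b u(t,x) = b α² u(t, α x) pointwise for t > 0, x > 0, together with u(0,x) = u₀(x). -/
open MeasureTheory Real Filter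

open Topology
theorem stmt_0 (g b α : ℝ) (hg : 0 < g) (hb : 0 < b) (hα : 1 < α)
    (u₀ : ℝ → ℝ) (hsm : ContDiff ℝ (⊤ : ℕ∞) u₀) (hcs : HasCompactSupport u₀)
    (hsupp : tsupport u₀ ⊆ Set.Ioi 0) :
    ∀ u : ℝ → ℝ → ℝ,
      (u = fun t x => Real.exp (-(b + g) * t) *
        ∑' k : ℕ, u₀ (α ^ k * x * Real.exp (-g * t)) * (b * α ^ 2 * t) ^ k / (Nat.factorial k)) →
      ((∀ t ≥ (0:ℝ), ∀ x > (0:ℝ),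
          Summable fun k : ℕ =>
            u₀ (α ^ k * x * Real.exp (-g * t)) * (b * α ^ 2 * t) ^ k / (Nat.factorial k)) ∧
       (∀ t > (0:ℝ), ∀ x > (0:ℝ),
          deriv (fun τ => u τ x) t + deriv (fun ξ => g * ξ * u t ξ) x + b * u t x
            = b * α ^ 2 * u t (α * x)) ∧
       (∀ x > (0:ℝ), u 0 x = u₀ x)) := by
  have hα0 : (0:ℝ) < α := lt_trans one_pos hα
  have hαk : ∀ k : ℕ, (0:ℝ) < α ^ k := fun k => pow_pos hα0 k
  obtain ⟨M, hM0, hM⟩ : ∃ M, 0 < M ∧ ∀ y, M ≤ y → u₀ y = 0 := by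
    obtain ⟨C, hC⟩ := hcs.isCompact.bddAbove
    refine ⟨max C 0 + 1, by positivity, fun y hy => ?_⟩
    apply image_eq_zero_of_notMem_tsupport
    intro hmem
    have h1 := hC hmem
    have h2 := le_max_left C 0
    linarith
  have hvan : ∀ (k : ℕ) (τ ξ : ℝ), M ≤ α ^ k * ξ * Real.exp (-g * τ) →
      u₀ (α ^ k * ξ * Real.exp (-g * τ)) * (b * α ^ 2 * τ) ^ k / (Nat.factorial k : ℝ) = 0 := by
    intro k τ ξ h
    rw [hM _ h, zero_mul, zero_div]
  have hNgen : ∀ c : ℝ, 0 < c → ∃ N : ℕ, ∀ k, N ≤ k → M ≤ α ^ k * c := by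
    intro c hc
    obtain ⟨N, hN⟩ := eventually_atTop.mp
      ((tendsto_pow_atTop_atTop_of_one_lt hα).eventually_ge_atTop (M / c))
    refine ⟨N, fun k hk => ?_⟩
    have h := hN k hk
    calc M = M / c * c := by field_simp
      _ ≤ α ^ k * c := mul_le_mul_of_nonneg_right h hc.le
  intro u hu
  refine ⟨?_, ?_, ?_⟩
  · -- summability
    intro t ht x hx
    obtain ⟨N, hN⟩ := hNgen (x * Real.exp (-g * t)) (by positivity)
    apply summable_of_ne_finset_zero (s := Finset.range N)
    intro k hk
    have hk' : N ≤ k := by simpa [Finset.mem_range, not_lt] using hk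
    apply hvan
    rw [mul_assoc]
    exact hN k hk'
  · -- PDE
    intro t ht x hx
    have hdiff := hsm.differentiable (by simp)
    set v := deriv u₀ with hv
    have hdu : ∀ y, HasDerivAt u₀ (v y) y := fun y => (hdiff y).hasDerivAt
    obtain ⟨N, hN⟩ := hNgen (x / 2 * Real.exp (-g * (t + 1))) (by positivity)
    have hvan2 : ∀ k, N ≤ k → ∀ τ, τ ≤ t + 1 → ∀ ξ, x / 2 ≤ ξ →
        u₀ (α ^ k * ξ * Real.exp (-g * τ)) * (b * α ^ 2 * τ) ^ k / (Nat.factorial k : ℝ) = 0 := by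
      intro k hk τ hτ ξ hξ
      apply hvan
      rw [mul_assoc]
      refine le_trans (hN k hk) (mul_le_mul_of_nonneg_left ?_ (hαk k).le)
      have h1 : Real.exp (-g * (t + 1)) ≤ Real.exp (-g * τ) := by
        apply Real.exp_le_exp.mpr; nlinarith
      exact mul_le_mul hξ h1 (Real.exp_pos _).le (by linarith)
    have hrep : ∀ (m : ℕ), N ≤ m → ∀ τ, τ ≤ t + 1 → ∀ ξ, x / 2 ≤ ξ →
        u τ ξ = ∑ k ∈ Finset.range m, Real.exp (-(b + g) * τ) *
          (u₀ (α ^ k * ξ * Real.exp (-g * τ)) * (b * α ^ 2 * τ) ^ k / (Nat.factorial k : ℝ)) := by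
      intro m hm τ hτ ξ hξ
      simp only [hu]
      rw [← Finset.mul_sum]
      congr 1
      apply tsum_eq_sum
      intro k hk
      have hk' : N ≤ k := le_trans hm (by simpa [Finset.mem_range, not_lt] using hk)
      exact hvan2 k hk' τ hτ ξ hξ
    have hterm_t : ∀ k : ℕ, HasDerivAt (fun τ => Real.exp (-(b + g) * τ) *
        (u₀ (α ^ k * x * Real.exp (-g * τ)) * (b * α ^ 2 * τ) ^ k / (Nat.factorial k : ℝ)))
        (Real.exp (-(b + g) * t) * (-(b + g)) *
          (u₀ (α ^ k * x * Real.exp (-g * t)) * (b * α ^ 2 * t) ^ k / (Nat.factorial k : ℝ))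
         + Real.exp (-(b + g) * t) *
          ((v (α ^ k * x * Real.exp (-g * t)) * (α ^ k * x * (Real.exp (-g * t) * (-g))) *
              (b * α ^ 2 * t) ^ k
            + u₀ (α ^ k * x * Real.exp (-g * t)) *
              ((k : ℝ) * (b * α ^ 2 * t) ^ (k - 1) * (b * α ^ 2)))
           / (Nat.factorial k : ℝ))) t := by
      intro k
      have hA : HasDerivAt (fun τ => Real.exp (-(b + g) * τ))
          (Real.exp (-(b + g) * t) * (-(b + g))) t := by
        simpa using ((hasDerivAt_id t).const_mul (-(b + g))).exp
      have harg : HasDerivAt (fun τ => α ^ k * x * Real.exp (-g * τ))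
          (α ^ k * x * (Real.exp (-g * t) * (-g))) t := by
        simpa [mul_comm] using (((hasDerivAt_id t).const_mul (-g)).exp).const_mul (α ^ k * x)
      have hB : HasDerivAt (fun τ => u₀ (α ^ k * x * Real.exp (-g * τ)))
          (v (α ^ k * x * Real.exp (-g * t)) * (α ^ k * x * (Real.exp (-g * t) * (-g)))) t :=
        (hdu _).comp t harg
      have hC : HasDerivAt (fun τ => (b * α ^ 2 * τ) ^ k)
          ((k : ℝ) * (b * α ^ 2 * t) ^ (k - 1) * (b * α ^ 2)) t := by
        simpa using ((hasDerivAt_id t).const_mul (b * α ^ 2)).fun_pow k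
      exact hA.mul ((hB.mul hC).div_const _)
    have hterm_x : ∀ k : ℕ, HasDerivAt (fun ξ => g * ξ * (Real.exp (-(b + g) * t) *
        (u₀ (α ^ k * ξ * Real.exp (-g * t)) * (b * α ^ 2 * t) ^ k / (Nat.factorial k : ℝ))))
        (g * 1 * (Real.exp (-(b + g) * t) *
            (u₀ (α ^ k * x * Real.exp (-g * t)) * (b * α ^ 2 * t) ^ k / (Nat.factorial k : ℝ)))
         + g * x * (Real.exp (-(b + g) * t) *
            (v (α ^ k * x * Real.exp (-g * t)) * (α ^ k * Real.exp (-g * t)) *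
              (b * α ^ 2 * t) ^ k / (Nat.factorial k : ℝ)))) x := by
      intro k
      have harg : HasDerivAt (fun ξ => α ^ k * ξ * Real.exp (-g * t))
          (α ^ k * Real.exp (-g * t)) x := by
        simpa using ((hasDerivAt_id x).const_mul (α ^ k)).mul_const (Real.exp (-g * t))
      have hB : HasDerivAt (fun ξ => u₀ (α ^ k * ξ * Real.exp (-g * t)))
          (v (α ^ k * x * Real.exp (-g * t)) * (α ^ k * Real.exp (-g * t))) x :=
        (hdu _).comp x harg
      have hin := (((hB.mul_const ((b * α ^ 2 * t) ^ k)).div_const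
        (Nat.factorial k : ℝ)).const_mul (Real.exp (-(b + g) * t)))
      have hgx : HasDerivAt (fun ξ => g * ξ) (g * 1) x := (hasDerivAt_id x).const_mul g
      exact hgx.mul hin
    have hEq_t : (fun τ => u τ x) =ᶠ[𝓝 t] (fun τ => ∑ k ∈ Finset.range (N + 1),
        Real.exp (-(b + g) * τ) *
          (u₀ (α ^ k * x * Real.exp (-g * τ)) * (b * α ^ 2 * τ) ^ k / (Nat.factorial k : ℝ))) := by
      filter_upwards [Iio_mem_nhds (show t < t + 1 by linarith)] with τ hτ
      exact hrep (N + 1) (Nat.le_succ N) τ hτ.le x (by linarith)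
    have hEq_x : (fun ξ => g * ξ * u t ξ) =ᶠ[𝓝 x] (fun ξ => ∑ k ∈ Finset.range (N + 1),
        g * ξ * (Real.exp (-(b + g) * t) *
          (u₀ (α ^ k * ξ * Real.exp (-g * t)) * (b * α ^ 2 * t) ^ k / (Nat.factorial k : ℝ)))) := by
      filter_upwards [Ioi_mem_nhds (show x / 2 < x by linarith)] with ξ hξ
      rw [hrep (N + 1) (Nat.le_succ N) t (by linarith) ξ hξ.le, Finset.mul_sum]
    have h1 := hEq_t.deriv_eq.trans
      (HasDerivAt.fun_sum (fun k (_ : k ∈ Finset.range (N + 1)) => hterm_t k)).deriv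
    have h2 := hEq_x.deriv_eq.trans
      (HasDerivAt.fun_sum (fun k (_ : k ∈ Finset.range (N + 1)) => hterm_x k)).deriv
    have h3 := hrep (N + 1) (Nat.le_succ N) t (by linarith) x (by linarith)
    have h4 := hrep N le_rfl t (by linarith) (α * x) (by nlinarith)
    have habs : ∀ (f h : ℕ → ℝ), (∀ j, f (j + 1) = b * α ^ 2 * h j) → f 0 = 0 →
        ∑ i ∈ Finset.range (N + 1), f i = b * α ^ 2 * ∑ j ∈ Finset.range N, h j := by
      intro f h hf h0
      rw [Finset.sum_range_succ', h0, add_zero, Finset.mul_sum]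
      exact Finset.sum_congr rfl fun j _ => hf j
    rw [h1, h2, h3, h4, Finset.mul_sum, ← Finset.sum_add_distrib, ← Finset.sum_add_distrib]
    refine habs _ _ (fun j => ?_) ?_
    · have harg : α ^ (j + 1) * x = α ^ j * (α * x) := by rw [pow_succ]; ring
      rw [harg, Nat.factorial_succ, Nat.add_sub_cancel]
      have hfac : (Nat.factorial j : ℝ) ≠ 0 := Nat.cast_ne_zero.mpr (Nat.factorial_ne_zero j)
      push_cast
      have hj1 : ((j : ℝ) + 1) ≠ 0 := by positivity
      field_simp
      ring
    · norm_num [Nat.factorial]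
      ring
  · -- initial condition
    intro x hx
    simp only [hu]
    have h0 : ∀ k ∉ Finset.range 1,
        u₀ (α ^ k * x * Real.exp (-g * 0)) * (b * α ^ 2 * 0) ^ k / (Nat.factorial k : ℝ) = 0 := by
      intro k hk
      have hk' : k ≠ 0 := by simpa [Finset.mem_range, Nat.lt_one_iff] using hk
      rw [show b * α ^ 2 * 0 = (0:ℝ) from mul_zero _, zero_pow hk', mul_zero, zero_div]
    rw [tsum_eq_sum h0]
    simp [Nat.factorial]
end

section
/- Let b, g > 0, α > 1, q ∈ ℝ, p ∈ [1,∞), and u₀ ∈ L^p((0,∞), x^q dx). Then for each t ≥ 0 the series u(t,x) = e^{-(b+g)t} ∑_{k=0}^∞ u₀(α^k x e^{-gt}) (bα²t)^k / k! converges in L^p((0,∞), x^q dx), and its L^p(x^q dx)-norm is bounded by e^{-(b+g)t} e^{g(q+1)t/p} exp(bα² t α^{-(q+1)/p}) ‖u₀‖_{L^p(x^q dx)}. -/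
open MeasureTheory Real Filter Set
open scoped ENNReal

/-!
The dilation `x ↦ c x` multiplies the norm of `L^p(x^q dx)` on `(0, ∞)` by `c^{-(q+1)/p}`, so the
`k`-th term of the series has norm `e^{g(q+1)t/p} (b α² t α^{-(q+1)/p})^k / k! ‖u₀‖`; these norms
sum to `e^{g(q+1)t/p} exp(b α² t α^{-(q+1)/p}) ‖u₀‖`. A series whose terms have summable `L^p`
norms converges absolutely almost everywhere, and by Minkowski's inequality its pointwise sum lies
in `L^p`, with norm at most the sum of the norms and tails tending to zero.
-/

theorem eLpNorm_const_mul {X 𝕜 : Type*} {_ : MeasurableSpace X} [NormedDivisionRing 𝕜]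
    (c : 𝕜) (f : X → 𝕜) (p : ℝ≥0∞) (μ : Measure X) :
    eLpNorm (fun x => c * f x) p μ = ‖c‖ₑ * eLpNorm f p μ :=
  eLpNorm_const_smul c f p μ

section SeriesInLp

variable {X E : Type*} {_ : MeasurableSpace X} {μ : Measure X} [NormedAddCommGroup E]
  [CompleteSpace E] {p : ℝ≥0∞} {f : ℕ → X → E}

theorem ae_hasSum_of_tsum_eLpNorm_ne_top (hp : 1 ≤ p) (hf : ∀ k, AEStronglyMeasurable (f k) μ)
    (hsum : ∑' k, eLpNorm (f k) p μ ≠ ∞) :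
    ∀ᵐ x ∂μ, HasSum (fun k => f k x) (∑' k, f k x) :=
  (summable_norm_of_tsum_eLpNorm_ne_top hp hf hsum).mono fun _ h => h.of_norm.hasSum

theorem eLpNorm_tsum_le (hp : 1 ≤ p) (hf : ∀ k, AEStronglyMeasurable (f k) μ) :
    eLpNorm (fun x => ∑' k, f k x) p μ ≤ ∑' k, eLpNorm (f k) p μ := by
  rcases eq_or_ne (∑' k, eLpNorm (f k) p μ) ∞ with h | hsum
  · simp [h]
  refine Lp.eLpNorm_le_of_ae_tendsto (u := atTop) (f := fun n => ∑ k ∈ Finset.range n, f k)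
    (Eventually.of_forall fun n => ?_)
    (fun n => Finset.aestronglyMeasurable_sum _ fun k _ => hf k) ?_
  · exact (eLpNorm_sum_le (fun k _ => hf k) hp).trans (ENNReal.sum_le_tsum _)
  · filter_upwards [ae_hasSum_of_tsum_eLpNorm_ne_top hp hf hsum] with x hx
    simpa only [Finset.sum_apply] using hx.tendsto_sum_nat

theorem memLp_tsum (hp : 1 ≤ p) (hf : ∀ k, AEStronglyMeasurable (f k) μ)
    (hsum : ∑' k, eLpNorm (f k) p μ ≠ ∞) : MemLp (fun x => ∑' k, f k x) p μ := by
  refine ⟨aestronglyMeasurable_of_tendsto_ae atTop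
    (fun n => Finset.aestronglyMeasurable_sum (Finset.range n) fun k _ => hf k) ?_,
    (eLpNorm_tsum_le hp hf).trans_lt hsum.lt_top⟩
  filter_upwards [ae_hasSum_of_tsum_eLpNorm_ne_top hp hf hsum] with x hx
  simpa only [Finset.sum_apply] using hx.tendsto_sum_nat

theorem tendsto_eLpNorm_tsum_sub_sum (hp : 1 ≤ p) (hf : ∀ k, AEStronglyMeasurable (f k) μ)
    (hsum : ∑' k, eLpNorm (f k) p μ ≠ ∞) :
    Tendsto (fun n => eLpNorm (fun x => ∑' k, f k x - ∑ k ∈ Finset.range n, f k x) p μ)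
      atTop (nhds 0) := by
  have htail : ∀ n, eLpNorm (fun x => ∑' k, f k x - ∑ k ∈ Finset.range n, f k x) p μ
      ≤ ∑' k, eLpNorm (f (k + n)) p μ := fun n =>
    calc _ = eLpNorm (fun x => ∑' k, f (k + n) x) p μ := by
          refine eLpNorm_congr_ae ?_
          filter_upwards [ae_hasSum_of_tsum_eLpNorm_ne_top hp hf hsum] with x hx
          exact sub_eq_iff_eq_add'.2 (hx.summable.sum_add_tsum_nat_add n).symm
      _ ≤ _ := eLpNorm_tsum_le hp fun k => hf (k + n)
  exact tendsto_of_tendsto_of_tendsto_of_le_of_le tendsto_const_nhds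
    (ENNReal.tendsto_sum_nat_add _ hsum) (fun _ => zero_le) htail

end SeriesInLp

theorem MeasurableEquiv.map_withDensity {α β : Type*} [MeasurableSpace α] [MeasurableSpace β]
    (e : α ≃ᵐ β) (μ : Measure α) (ρ : α → ℝ≥0∞) :
    (μ.withDensity ρ).map e = (μ.map e).withDensity (ρ ∘ e.symm) := by
  ext s hs
  rw [e.map_apply, withDensity_apply _ (e.measurable hs), withDensity_apply _ hs, e.restrict_map,
    lintegral_map_equiv]
  simp

noncomputable def ioiPowWeight (q : ℝ) : Measure ℝ :=
  (volume.restrict (Ioi 0)).withDensity fun x => ENNReal.ofReal (x ^ q)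

theorem map_const_mul_volume_restrict_Ioi {c : ℝ} (hc : 0 < c) :
    (volume.restrict (Ioi (0 : ℝ))).map (c * ·)
      = ENNReal.ofReal c⁻¹ • volume.restrict (Ioi 0) := by
  have hpre : (c * ·) ⁻¹' Ioi (0 : ℝ) = Ioi 0 := by
    ext x; simp [mul_pos_iff_of_pos_left hc]
  have hmap :=
    Measure.restrict_map (μ := volume) (measurable_const_mul c) (measurableSet_Ioi (a := 0))
  rw [hpre] at hmap
  rw [← hmap, Real.map_volume_mul_left hc.ne', abs_of_pos (inv_pos.2 hc), Measure.restrict_smul]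

theorem map_const_mul_ioiPowWeight (q : ℝ) {c : ℝ} (hc : 0 < c) :
    (ioiPowWeight q).map (c * ·) = ENNReal.ofReal (c ^ (-(q + 1))) • ioiPowWeight q := by
  have hdensity : (fun x => ENNReal.ofReal ((c⁻¹ * x) ^ q)) =ᵐ[volume.restrict (Ioi 0)]
      ENNReal.ofReal (c ^ (-q)) • fun x => ENNReal.ofReal (x ^ q) := by
    filter_upwards [ae_restrict_mem measurableSet_Ioi] with x hx
    rw [Pi.smul_apply, smul_eq_mul, ← ENNReal.ofReal_mul (by positivity),
      mul_rpow (by positivity) hx.le, inv_rpow hc.le, rpow_neg hc.le]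
  have hconst :
      ENNReal.ofReal c⁻¹ * ENNReal.ofReal (c ^ (-q)) = ENNReal.ofReal (c ^ (-(q + 1))) := by
    rw [← ENNReal.ofReal_mul (by positivity), neg_add, rpow_add hc, rpow_neg_one, mul_comm]
  let e : ℝ ≃ᵐ ℝ := (Homeomorph.mulLeft₀ c hc.ne').toMeasurableEquiv
  have he : ⇑e = (c * ·) := rfl
  have he_symm : ⇑e.symm = (c⁻¹ * ·) := rfl
  rw [ioiPowWeight, ← he, MeasurableEquiv.map_withDensity, he, he_symm, Function.comp_def,
    map_const_mul_volume_restrict_Ioi hc, withDensity_smul_measure,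
    withDensity_congr_ae hdensity, withDensity_smul' _ _ ENNReal.ofReal_ne_top, smul_smul, hconst]

section Scaling

variable {E : Type*} [NormedAddCommGroup E] {q : ℝ} {p : ℝ≥0∞} {f : ℝ → E} {c : ℝ}

theorem aestronglyMeasurable_map_const_mul_ioiPowWeight
    (hf : AEStronglyMeasurable f (ioiPowWeight q)) (hc : 0 < c) :
    AEStronglyMeasurable f ((ioiPowWeight q).map (c * ·)) := by
  rw [map_const_mul_ioiPowWeight q hc]
  exact hf.smul_measure _

-- For `p = ∞` the exponent is `0` (as `∞.toReal = 0`), which is the right factor there too.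
theorem eLpNorm_comp_const_mul_ioiPowWeight (hf : AEStronglyMeasurable f (ioiPowWeight q))
    (hc : 0 < c) :
    eLpNorm (fun x => f (c * x)) p (ioiPowWeight q)
      = ENNReal.ofReal (c ^ (-(q + 1) / p.toReal)) * eLpNorm f p (ioiPowWeight q) := by
  rw [← Function.comp_def,
    ← eLpNorm_map_measure (aestronglyMeasurable_map_const_mul_ioiPowWeight hf hc)
      (measurable_const_mul c).aemeasurable, map_const_mul_ioiPowWeight q hc,
    eLpNorm_smul_measure_of_ne_zero (by positivity), smul_eq_mul, one_div, ENNReal.toReal_inv,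
    ENNReal.ofReal_rpow_of_pos (by positivity), ← rpow_mul hc.le, div_eq_mul_inv]

theorem MeasureTheory.MemLp.comp_const_mul_ioiPowWeight (hf : MemLp f p (ioiPowWeight q))
    (hc : 0 < c) : MemLp (fun x => f (c * x)) p (ioiPowWeight q) := by
  refine ⟨(aestronglyMeasurable_map_const_mul_ioiPowWeight hf.1 hc).comp_aemeasurable
    (measurable_const_mul c).aemeasurable, ?_⟩
  rw [eLpNorm_comp_const_mul_ioiPowWeight hf.1 hc]
  exact ENNReal.mul_lt_top ENNReal.ofReal_lt_top hf.2

end Scaling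

theorem tsum_ofReal_mul_pow_div_factorial {C x : ℝ} (hC : 0 ≤ C) (hx : 0 ≤ x) :
    ∑' k : ℕ, ENNReal.ofReal (C * x ^ k / k.factorial) = ENNReal.ofReal (C * exp x) := by
  have hexp : HasSum (fun k : ℕ => C * x ^ k / k.factorial) (C * exp x) := by
    simpa only [mul_div_assoc, Real.exp_eq_exp_ℝ] using
      (NormedSpace.expSeries_div_hasSum_exp x).mul_left C
  rw [← ENNReal.ofReal_tsum_of_nonneg (fun k => by positivity) hexp.summable, hexp.tsum_eq]

section ScaledTerm

variable {q : ℝ} {p : ℝ≥0∞} {u₀ : ℝ → ℝ} {α s a : ℝ}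

theorem scaled_term_eq_smul (k : ℕ) :
    (fun x => u₀ (α ^ k * x * s) * a ^ k / k.factorial)
      = (a ^ k / k.factorial) • fun x => u₀ ((α ^ k * s) * x) := by
  ext x
  rw [Pi.smul_apply, smul_eq_mul, mul_right_comm, mul_div_assoc, mul_comm]

theorem memLp_scaled_term (hu₀ : MemLp u₀ p (ioiPowWeight q)) (hα : 0 < α) (hs : 0 < s)
    (k : ℕ) :
    MemLp (fun x => u₀ (α ^ k * x * s) * a ^ k / k.factorial) p (ioiPowWeight q) := by
  rw [scaled_term_eq_smul]
  exact (hu₀.comp_const_mul_ioiPowWeight (by positivity)).const_smul _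

theorem eLpNorm_scaled_term (hu₀ : AEStronglyMeasurable u₀ (ioiPowWeight q)) (hα : 0 < α)
    (hs : 0 < s) (ha : 0 ≤ a) (k : ℕ) :
    eLpNorm (fun x => u₀ (α ^ k * x * s) * a ^ k / k.factorial) p (ioiPowWeight q)
      = ENNReal.ofReal (s ^ (-(q + 1) / p.toReal) * (a * α ^ (-(q + 1) / p.toReal)) ^ k
          / k.factorial) * eLpNorm u₀ p (ioiPowWeight q) := by
  rw [scaled_term_eq_smul, eLpNorm_const_smul,
    eLpNorm_comp_const_mul_ioiPowWeight hu₀ (by positivity), ← mul_assoc,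
    Real.enorm_eq_ofReal (by positivity), ← ENNReal.ofReal_mul (by positivity),
    mul_rpow (by positivity) hs.le, ← rpow_natCast α k, ← rpow_mul hα.le, mul_comm (k : ℝ),
    rpow_mul hα.le, rpow_natCast, mul_pow]
  ring_nf

theorem tsum_eLpNorm_scaled_term (hu₀ : AEStronglyMeasurable u₀ (ioiPowWeight q)) (hα : 0 < α)
    (hs : 0 < s) (ha : 0 ≤ a) :
    ∑' k : ℕ, eLpNorm (fun x => u₀ (α ^ k * x * s) * a ^ k / k.factorial) p (ioiPowWeight q)
      = ENNReal.ofReal (s ^ (-(q + 1) / p.toReal) * exp (a * α ^ (-(q + 1) / p.toReal)))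
        * eLpNorm u₀ p (ioiPowWeight q) := by
  rw [tsum_congr fun k => eLpNorm_scaled_term hu₀ hα hs ha k, ENNReal.tsum_mul_right,
    tsum_ofReal_mul_pow_div_factorial (by positivity) (by positivity)]

end ScaledTerm

theorem stmt_2_general (b g α q p : ℝ) (hb : 0 < b) (hα : 1 < α) (hp : 1 ≤ p)
    (u₀ : ℝ → ℝ)
    (μ : Measure ℝ)
    (hμ : μ = (volume.restrict (Set.Ioi (0:ℝ))).withDensity fun x => ENNReal.ofReal (x ^ q))
    (hu₀ : MemLp u₀ (ENNReal.ofReal p) μ) :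
    ∀ u : ℝ → ℝ → ℝ,
      (u = fun t x => Real.exp (-(b + g) * t) *
        ∑' k : ℕ, u₀ (α ^ k * x * Real.exp (-g * t)) * (b * α ^ 2 * t) ^ k / (Nat.factorial k)) →
      ∀ t ≥ (0:ℝ),
        MemLp (u t) (ENNReal.ofReal p) μ ∧
        Tendsto (fun N : ℕ =>
            eLpNorm (fun x => u t x - Real.exp (-(b + g) * t) *
              ∑ k ∈ Finset.range N,
                u₀ (α ^ k * x * Real.exp (-g * t)) * (b * α ^ 2 * t) ^ k / (Nat.factorial k))
              (ENNReal.ofReal p) μ) atTop (nhds 0) ∧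
        eLpNorm (u t) (ENNReal.ofReal p) μ ≤
          ENNReal.ofReal (Real.exp (-(b + g) * t) * Real.exp (g * (q + 1) * t / p) *
              Real.exp (b * α ^ 2 * t * α ^ (-(q + 1) / p))) *
            eLpNorm u₀ (ENNReal.ofReal p) μ := by
  intro u hu t ht
  obtain rfl : μ = ioiPowWeight q := hμ
  subst hu
  beta_reduce
  have hP : 1 ≤ ENNReal.ofReal p := by simpa using ENNReal.ofReal_le_ofReal hp
  have hdilation : exp (-g * t) ^ (-(q + 1) / p) = exp (g * (q + 1) * t / p) := by
    rw [← exp_mul]; ring_nf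
  let F : ℕ → ℝ → ℝ := fun k x =>
    u₀ (α ^ k * x * exp (-g * t)) * (b * α ^ 2 * t) ^ k / k.factorial
  have hF_meas : ∀ k, AEStronglyMeasurable (F k) (ioiPowWeight q) := fun k =>
    (memLp_scaled_term hu₀ (one_pos.trans hα) (exp_pos _) k).1
  have hF_sum : ∑' k, eLpNorm (F k) (ENNReal.ofReal p) (ioiPowWeight q)
      = ENNReal.ofReal (exp (g * (q + 1) * t / p) * exp (b * α ^ 2 * t * α ^ (-(q + 1) / p)))
        * eLpNorm u₀ (ENNReal.ofReal p) (ioiPowWeight q) :=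
    (tsum_eLpNorm_scaled_term hu₀.1 (one_pos.trans hα) (exp_pos _) (by positivity)).trans
      (by rw [ENNReal.toReal_ofReal (by linarith), hdilation])
  have hF_fin : ∑' k, eLpNorm (F k) (ENNReal.ofReal p) (ioiPowWeight q) ≠ ∞ := by
    rw [hF_sum]; exact ENNReal.mul_ne_top ENNReal.ofReal_ne_top hu₀.eLpNorm_ne_top
  refine ⟨(memLp_tsum hP hF_meas hF_fin).const_mul _, ?_, ?_⟩
  · simp_rw [← mul_sub, eLpNorm_const_mul]
    exact mul_zero ‖exp (-(b + g) * t)‖ₑ ▸ ENNReal.Tendsto.const_mul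
      (tendsto_eLpNorm_tsum_sub_sum hP hF_meas hF_fin) (Or.inr enorm_ne_top)
  · rw [eLpNorm_const_mul, Real.enorm_eq_ofReal (exp_pos _).le, mul_assoc (exp _),
      ENNReal.ofReal_mul (exp_pos _).le, mul_assoc (ENNReal.ofReal _), ← hF_sum]
    gcongr
    exact eLpNorm_tsum_le hP hF_meas

theorem stmt_2 (b g α q p : ℝ) (hb : 0 < b) (hg : 0 < g) (hα : 1 < α) (hp : 1 ≤ p)
    (u₀ : ℝ → ℝ)
    (μ : Measure ℝ)
    (hμ : μ = (volume.restrict (Set.Ioi (0:ℝ))).withDensity fun x => ENNReal.ofReal (x ^ q))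
    (hu₀ : MemLp u₀ (ENNReal.ofReal p) μ) :
    ∀ u : ℝ → ℝ → ℝ,
      (u = fun t x => Real.exp (-(b + g) * t) *
        ∑' k : ℕ, u₀ (α ^ k * x * Real.exp (-g * t)) * (b * α ^ 2 * t) ^ k / (Nat.factorial k)) →
      ∀ t ≥ (0:ℝ),
        MemLp (u t) (ENNReal.ofReal p) μ ∧
        Tendsto (fun N : ℕ =>
            eLpNorm (fun x => u t x - Real.exp (-(b + g) * t) *
              ∑ k ∈ Finset.range N,
                u₀ (α ^ k * x * Real.exp (-g * t)) * (b * α ^ 2 * t) ^ k / (Nat.factorial k))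
              (ENNReal.ofReal p) μ) atTop (nhds 0) ∧
        eLpNorm (u t) (ENNReal.ofReal p) μ ≤
          ENNReal.ofReal (Real.exp (-(b + g) * t) * Real.exp (g * (q + 1) * t / p) *
              Real.exp (b * α ^ 2 * t * α ^ (-(q + 1) / p))) *
            eLpNorm u₀ (ENNReal.ofReal p) μ :=
  stmt_2_general b g α q p hb hα hp u₀ μ hμ hu₀
end

section
/- Let α > 1, x₀ ∈ (1/α, 1], x₁ ∈ (x₀, 1], and let u₀ be supported in [x₀, x₁]. Then for the explicit solution u(t,·) of the critical growth-fragmentation equation, for every t > 0 and every k ∈ ℕ, u(t,x) = 0 for all x in the open interval (α^{-k-1} e^{gt}, α^{-k} x₀ e^{gt}). -/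
/-!
Writing `z = x e^{-gt}`, the `j`-th term of the series evaluates `u₀` at `α^j z`. If
`α^{-k-1} < z < α^{-k} x₀`, then `α^j z < x₀` for `j ≤ k` and `α^j z > 1 ≥ x₁` for `j > k`, so
every term vanishes.
-/

open Real

lemma pow_mul_notMem_Icc {α x₀ x₁ z : ℝ} {k : ℕ} (hα : 1 ≤ α) (hx₁ : x₁ ≤ 1)
    (hlo : 1 < α ^ (k + 1) * z) (hhi : α ^ k * z < x₀) (j : ℕ) :
    α ^ j * z ∉ Set.Icc x₀ x₁ := by
  have hz : 0 < z := pos_of_mul_pos_right (one_pos.trans hlo) (by positivity)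
  rintro ⟨hx₀j, hjx₁⟩
  rcases le_or_gt j k with hjk | hkj
  · have : α ^ j * z ≤ α ^ k * z := by gcongr
    linarith
  · have : α ^ (k + 1) * z ≤ α ^ j * z := by gcongr; exact hkj
    linarith

lemma rpow_neg_natCast_eq_inv_pow (α : ℝ) (k : ℕ) : α ^ (-(k : ℝ)) = (α ^ k)⁻¹ := by
  rw [rpow_neg_natCast, zpow_neg, zpow_natCast]

lemma rpow_neg_natCast_sub_one_eq_inv_pow (α : ℝ) (k : ℕ) :
    α ^ (-(k : ℝ) - 1) = (α ^ (k + 1))⁻¹ := by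
  rw [← neg_add', ← Nat.cast_add_one, rpow_neg_natCast_eq_inv_pow]

theorem stmt_6_general (b g α x₀ x₁ : ℝ) (hα : 1 < α)
    (hx₁ : x₁ ∈ Set.Ioc x₀ 1)
    (u₀ : ℝ → ℝ) (hsupp : Function.support u₀ ⊆ Set.Icc x₀ x₁) :
    ∀ u : ℝ → ℝ → ℝ,
      (u = fun t x => Real.exp (-(b + g) * t) *
        ∑' k : ℕ, u₀ (α ^ k * x * Real.exp (-g * t)) * (b * α ^ 2 * t) ^ k / (Nat.factorial k)) →
      ∀ t > (0:ℝ), ∀ k : ℕ,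
        ∀ x ∈ Set.Ioo (α ^ (-(k:ℝ) - 1) * Real.exp (g * t))
          (α ^ (-(k:ℝ)) * x₀ * Real.exp (g * t)), u t x = 0 := by
  rintro u rfl t - k x ⟨hlo, hhi⟩
  rw [rpow_neg_natCast_sub_one_eq_inv_pow] at hlo
  rw [rpow_neg_natCast_eq_inv_pow] at hhi
  have hE : exp (-g * t) = (exp (g * t))⁻¹ := by rw [← exp_neg, neg_mul]
  have hlo' : 1 < α ^ (k + 1) * (x * exp (-g * t)) := by
    rw [hE]; field_simp at hlo ⊢; exact hlo
  have hhi' : α ^ k * (x * exp (-g * t)) < x₀ := by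
    rw [hE]; field_simp at hhi ⊢; exact hhi
  have hterm (j : ℕ) : u₀ (α ^ j * x * exp (-g * t)) = 0 :=
    Function.notMem_support.mp fun h ↦
      pow_mul_notMem_Icc hα.le hx₁.2 hlo' hhi' j (by simpa only [mul_assoc] using hsupp h)
  simp only [hterm, zero_mul, zero_div, tsum_zero, mul_zero]

theorem stmt_6 (b g α x₀ x₁ : ℝ) (hb : 0 < b) (hg : 0 < g) (hα : 1 < α)
    (hx₀ : x₀ ∈ Set.Ioc (1 / α) 1) (hx₁ : x₁ ∈ Set.Ioc x₀ 1)
    (u₀ : ℝ → ℝ) (hsupp : Function.support u₀ ⊆ Set.Icc x₀ x₁) :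
    ∀ u : ℝ → ℝ → ℝ,
      (u = fun t x => Real.exp (-(b + g) * t) *
        ∑' k : ℕ, u₀ (α ^ k * x * Real.exp (-g * t)) * (b * α ^ 2 * t) ^ k / (Nat.factorial k)) →
      ∀ t > (0:ℝ), ∀ k : ℕ,
        ∀ x ∈ Set.Ioo (α ^ (-(k:ℝ) - 1) * Real.exp (g * t))
          (α ^ (-(k:ℝ)) * x₀ * Real.exp (g * t)), u t x = 0 :=
  stmt_6_general b g α x₀ x₁ hα hx₁ u₀ hsupp
end

section
/- Let α > 1 and let u₀ : ℝ → ℝ be continuous with compact support in (0,∞), and let v(t,x) = e^{-t} ∑_{k=0}^∞ u₀(α^k x) (α²t)^k / k!. Define r(t,y) = t e^{2ty} v(t, e^{ty}) for t > 0, y ∈ ℝ. Then for every t > 0, ∫_{-∞}^{∞} r(t,y) dy = ∫₀^∞ x v(t,x) dx = ∫₀^∞ x u₀(x) dx. -/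
/-!
Under `x = e^{ty}` the integral of `r(t, ·)` becomes the first moment `∫₀^∞ x v(t,x) dx`.
The `k`-th term of `v` rescales `u₀` by `α^k`, which divides its first moment by `α^{2k}`;
this cancels the factor `α^{2k}` in `(α²t)^k`, so integrating term by term leaves the first
moment of `u₀` weighted by the Poisson distribution `e^{-t} t^k / k!`, whose total mass is `1`.
-/

open MeasureTheory Real Set ProbabilityTheory

lemma integral_exp_smul_comp_exp {E : Type*} [NormedAddCommGroup E] [NormedSpace ℝ E]
    (g : ℝ → E) : ∫ y, exp y • g (exp y) = ∫ x in Ioi 0, g x := by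
  rw [← range_exp, ← image_univ]
  simpa [abs_of_pos (exp_pos _)] using (integral_image_eq_integral_abs_deriv_smul
    MeasurableSet.univ (fun y _ ↦ (hasDerivAt_exp y).hasDerivWithinAt)
    exp_injective.injOn g).symm

lemma integral_mul_exp_two_mul_comp_exp {t : ℝ} (ht : 0 < t) (f : ℝ → ℝ) :
    ∫ y, t * exp (2 * t * y) * f (exp (t * y)) = ∫ x in Ioi 0, x * f x := by
  have h := Measure.integral_comp_mul_left (fun y ↦ exp y * (exp y * f (exp y))) t
  simp only [smul_eq_mul, abs_inv, abs_of_pos ht] at h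
  calc ∫ y, t * exp (2 * t * y) * f (exp (t * y))
      = t * ∫ y, exp (t * y) * (exp (t * y) * f (exp (t * y))) := by
        rw [← integral_const_mul]
        congr 1 with y
        rw [show 2 * t * y = t * y + t * y by ring, exp_add]
        ring
    _ = ∫ x in Ioi 0, x * f x := by
        rw [h, mul_inv_cancel_left₀ ht.ne', ← integral_exp_smul_comp_exp]
        rfl

lemma integral_Ioi_mul_comp_mul_left (g : ℝ → ℝ) {c : ℝ} (hc : 0 < c) :
    ∫ x in Ioi 0, x * g (c * x) = (∫ x in Ioi 0, x * g x) / c ^ 2 := by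
  have h := integral_comp_mul_left_Ioi (fun x ↦ x * g x) 0 hc
  simp only [mul_zero, smul_eq_mul, mul_assoc, integral_const_mul] at h
  rw [eq_div_iff (by positivity)]
  linear_combination c * h + (∫ x in Ioi 0, x * g x) * mul_inv_cancel₀ hc.ne'

lemma integral_Ioi_mul_tsum_comp_pow_mul {u : ℝ → ℝ} (hu : Continuous u)
    (hcs : HasCompactSupport u) {α : ℝ} (hα : 0 < α) {a : ℕ → ℝ}
    (ha : Summable fun k ↦ |a k| / (α ^ 2) ^ k) :
    ∫ x in Ioi 0, x * ∑' k, a k * u (α ^ k * x) =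
      (∑' k, a k / (α ^ 2) ^ k) * ∫ x in Ioi 0, x * u x := by
  have hpow : ∀ k : ℕ, (α ^ k) ^ 2 = (α ^ 2) ^ k := fun k ↦ by rw [← pow_mul, ← pow_mul, mul_comm]
  have hint : ∀ k : ℕ, IntegrableOn (fun x ↦ a k * (x * u (α ^ k * x))) (Ioi 0) := by
    intro k
    have hcs_k : HasCompactSupport fun x ↦ u (α ^ k * x) :=
      hcs.comp_isClosedEmbedding (Homeomorph.mulLeft₀ _ (pow_pos hα k).ne').isClosedEmbedding
    refine (Continuous.integrable_of_hasCompactSupport ?_ (hcs_k.mul_left.mul_left)).integrableOn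
    fun_prop
  have hnorm : ∀ k : ℕ, ∫ x in Ioi 0, ‖a k * (x * u (α ^ k * x))‖ =
      |a k| / (α ^ 2) ^ k * ∫ x in Ioi 0, x * |u x| := by
    intro k
    rw [setIntegral_congr_fun measurableSet_Ioi (g := fun x ↦ |a k| * (x * |u (α ^ k * x)|))
      fun x (hx : 0 < x) ↦ by simp only [norm_mul, norm_eq_abs, abs_of_pos hx],
      integral_const_mul, integral_Ioi_mul_comp_mul_left (|u ·|) (pow_pos hα k), hpow]
    ring
  have hsum : Summable fun k ↦ ∫ x in Ioi 0, ‖a k * (x * u (α ^ k * x))‖ := by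
    simpa only [hnorm] using ha.mul_right _
  calc ∫ x in Ioi 0, x * ∑' k, a k * u (α ^ k * x)
      = ∫ x in Ioi 0, ∑' k, a k * (x * u (α ^ k * x)) := by
        congr 1 with x
        rw [← tsum_mul_left]
        congr 1 with k
        ring
    _ = ∑' k, ∫ x in Ioi 0, a k * (x * u (α ^ k * x)) :=
        (integral_tsum_of_summable_integral_norm hint hsum).symm
    _ = ∑' k, a k / (α ^ 2) ^ k * ∫ x in Ioi 0, x * u x := by
        congr 1 with k
        rw [integral_const_mul, integral_Ioi_mul_comp_mul_left u (pow_pos hα k), hpow]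
        ring
    _ = (∑' k, a k / (α ^ 2) ^ k) * ∫ x in Ioi 0, x * u x := tsum_mul_right

theorem stmt_8_general (α : ℝ) (hα : 1 < α)
    (u₀ : ℝ → ℝ) (hcont : Continuous u₀) (hcs : HasCompactSupport u₀) :
    ∀ v : ℝ → ℝ → ℝ,
      (v = fun t x => Real.exp (-t) *
        ∑' k : ℕ, u₀ (α ^ k * x) * (α ^ 2 * t) ^ k / (Nat.factorial k)) →
      ∀ t > (0:ℝ),
        (∫ y : ℝ, t * Real.exp (2 * t * y) * v t (Real.exp (t * y)))
            = (∫ x in Set.Ioi (0:ℝ), x * v t x) ∧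
        (∫ x in Set.Ioi (0:ℝ), x * v t x) = (∫ x in Set.Ioi (0:ℝ), x * u₀ x) := by
  intro v hv t ht
  refine ⟨integral_mul_exp_two_mul_comp_exp ht (v t), ?_⟩
  subst hv
  have hα0 : 0 < α := zero_lt_one.trans hα
  set a : ℕ → ℝ := fun k ↦ exp (-t) * (α ^ 2 * t) ^ k / k.factorial
  have hpoisson : ∀ k, a k / (α ^ 2) ^ k = exp (-t) * t ^ k / k.factorial := fun k ↦ by
    simp only [a, mul_pow]
    field_simp
  have hpoisson_sum : HasSum (fun k ↦ a k / (α ^ 2) ^ k) 1 := by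
    rw [funext hpoisson]
    exact hasSum_one_poissonMeasure ⟨t, ht.le⟩
  have hseries : ∀ x, x * (exp (-t) * ∑' k, u₀ (α ^ k * x) * (α ^ 2 * t) ^ k / k.factorial) =
      x * ∑' k, a k * u₀ (α ^ k * x) := fun x ↦ by
    rw [← tsum_mul_left]
    congr 2 with k
    ring
  simp only [hseries]
  rw [integral_Ioi_mul_tsum_comp_pow_mul hcont hcs hα0, hpoisson_sum.tsum_eq, one_mul]
  refine hpoisson_sum.summable.congr fun k ↦ ?_
  rw [abs_of_nonneg (by positivity)]

theorem stmt_8 (α : ℝ) (hα : 1 < α)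
    (u₀ : ℝ → ℝ) (hcont : Continuous u₀) (hcs : HasCompactSupport u₀)
    (hsupp : tsupport u₀ ⊆ Set.Ioi 0) :
    ∀ v : ℝ → ℝ → ℝ,
      (v = fun t x => Real.exp (-t) *
        ∑' k : ℕ, u₀ (α ^ k * x) * (α ^ 2 * t) ^ k / (Nat.factorial k)) →
      ∀ t > (0:ℝ),
        (∫ y : ℝ, t * Real.exp (2 * t * y) * v t (Real.exp (t * y)))
            = (∫ x in Set.Ioi (0:ℝ), x * v t x) ∧
        (∫ x in Set.Ioi (0:ℝ), x * v t x) = (∫ x in Set.Ioi (0:ℝ), x * u₀ x) :=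
  stmt_8_general α hα u₀ hcont hcs
end

section
/- Let α > 1 and u₀ nonnegative, measurable, with ∫₀^∞ x u₀(x) dx < ∞. For v(t,x) = e^{-t} ∑_{k=0}^∞ u₀(α^k x)(α²t)^k/k!, the first moment is conserved: ∫₀^∞ x v(t,x) dx = ∫₀^∞ x u₀(x) dx for all t ≥ 0. -/
open MeasureTheory Real

/-!
Substituting `y = α ^ k * x` shows that the `k`-th term of the series has first moment
`e^{-t} (α² t)^k / k! · α^{-2k} M = e^{-t} t^k / k! · M`, where `M` is the first moment of `u₀`:
a Poisson weight times `M`, and the Poisson weights sum to `1`. Monotone convergence exchanges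
sum and integral; since `M < ∞`, the real series converges almost everywhere, so there its real
`tsum` (which is `0` for a divergent series) agrees with the `ℝ≥0∞`-valued one.
-/

section

open Set Nat

theorem setLIntegral_Ioi_comp_mul_left {g : ℝ → ENNReal} (hg : Measurable g) (a : ℝ) {b : ℝ}
    (hb : 0 < b) :
    ∫⁻ x in Ioi a, g (b * x) = ENNReal.ofReal b⁻¹ * ∫⁻ x in Ioi (b * a), g x := by
  have h := setLIntegral_map (μ := volume) (measurableSet_Ioi (a := b * a)) hg
    (measurable_const_mul b)
  rw [Real.map_volume_mul_left hb.ne', Measure.restrict_smul, lintegral_smul_measure,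
    abs_of_pos (inv_pos.mpr hb), smul_eq_mul] at h
  rw [h, preimage_const_mul_Ioi₀ _ hb, mul_div_cancel_left₀ _ hb.ne']

theorem lintegral_Ioi_mul_comp_mul_left {u : ℝ → ℝ} (hu : Measurable u) {c : ℝ} (hc : 0 < c) :
    ∫⁻ x in Ioi 0, ENNReal.ofReal (x * u (c * x))
      = ENNReal.ofReal (c ^ 2)⁻¹ * ∫⁻ x in Ioi 0, ENNReal.ofReal (x * u x) := by
  have hmoment : Measurable fun x => ENNReal.ofReal (x * u x) :=
    (measurable_id.mul hu).ennreal_ofReal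
  have hsplit : ∀ x, x * u (c * x) = c⁻¹ * (c * x * u (c * x)) := fun x => by
    field_simp
  simp_rw [hsplit, ENNReal.ofReal_mul (inv_nonneg.mpr hc.le)]
  rw [lintegral_const_mul _ (by fun_prop),
    setLIntegral_Ioi_comp_mul_left hmoment 0 hc, mul_zero, ← mul_assoc,
    ← ENNReal.ofReal_mul (inv_nonneg.mpr hc.le), ← mul_inv, sq]

theorem lintegral_ofReal_tsum {X : Type*} [MeasurableSpace X] {μ : Measure X}
    {f : ℕ → X → ℝ} (hf : ∀ k, AEMeasurable (f k) μ) (hf_nonneg : ∀ k, 0 ≤ᵐ[μ] f k)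
    (hfin : ∑' k, ∫⁻ x, ENNReal.ofReal (f k x) ∂μ ≠ ⊤) :
    ∫⁻ x, ENNReal.ofReal (∑' k, f k x) ∂μ = ∑' k, ∫⁻ x, ENNReal.ofReal (f k x) ∂μ := by
  have hmeas : ∀ k, AEMeasurable (fun x => ENNReal.ofReal (f k x)) μ :=
    fun k => (hf k).ennreal_ofReal
  rw [← lintegral_tsum hmeas] at hfin ⊢
  have hfinite := ae_lt_top' (AEMeasurable.tsum hmeas) hfin
  refine lintegral_congr_ae ?_
  filter_upwards [hfinite, ae_all_iff.mpr hf_nonneg] with x hx hx_nonneg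
  have hsummable : Summable fun k => f k x := by
    simpa [ENNReal.toReal_ofReal (hx_nonneg _)] using ENNReal.summable_toReal hx.ne
  exact ENNReal.ofReal_tsum_of_nonneg hx_nonneg hsummable

theorem tsum_ofReal_poisson {t : ℝ} (ht : 0 ≤ t) :
    ∑' n, ENNReal.ofReal (exp (-t) * t ^ n / n !) = 1 := by
  have h : HasSum (fun n => exp (-t) * t ^ n / n !) 1 :=
    ProbabilityTheory.hasSum_one_poissonMeasure ⟨t, ht⟩
  rw [← ENNReal.ofReal_tsum_of_nonneg (fun n => by positivity) h.summable, h.tsum_eq,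
    ENNReal.ofReal_one]

theorem lintegral_Ioi_mul_series_term {α : ℝ} (hα : 0 < α) {u : ℝ → ℝ} (hu : Measurable u)
    {t : ℝ} (ht : 0 ≤ t) (k : ℕ) :
    ∫⁻ x in Ioi 0, ENNReal.ofReal (x * (exp (-t) * (u (α ^ k * x) * (α ^ 2 * t) ^ k / k !)))
      = ENNReal.ofReal (exp (-t) * t ^ k / k !) * ∫⁻ x in Ioi 0, ENNReal.ofReal (x * u x) := by
  have hc : 0 ≤ exp (-t) * (α ^ 2 * t) ^ k / k ! := by positivity
  have hsplit : ∀ x, x * (exp (-t) * (u (α ^ k * x) * (α ^ 2 * t) ^ k / k !))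
      = exp (-t) * (α ^ 2 * t) ^ k / k ! * (x * u (α ^ k * x)) := fun x => by ring
  simp_rw [hsplit, ENNReal.ofReal_mul hc]
  rw [lintegral_const_mul _ (by fun_prop),
    lintegral_Ioi_mul_comp_mul_left hu (pow_pos hα k), ← mul_assoc,
    ← ENNReal.ofReal_mul hc]
  congr 2
  field_simp
  ring

end

theorem stmt_9 (α : ℝ) (hα : 1 < α)
    (u₀ : ℝ → ℝ) (hmeas : Measurable u₀) (hpos : ∀ x, 0 ≤ u₀ x)
    (hfin : ∫⁻ x in Set.Ioi (0:ℝ), ENNReal.ofReal (x * u₀ x) < ⊤) :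
    ∀ v : ℝ → ℝ → ℝ,
      (v = fun t x => Real.exp (-t) *
        ∑' k : ℕ, u₀ (α ^ k * x) * (α ^ 2 * t) ^ k / (Nat.factorial k)) →
      ∀ t ≥ (0:ℝ),
        ∫⁻ x in Set.Ioi (0:ℝ), ENNReal.ofReal (x * v t x)
          = ∫⁻ x in Set.Ioi (0:ℝ), ENNReal.ofReal (x * u₀ x) := by
  rintro v rfl t ht
  have hterms : ∑' k : ℕ, ∫⁻ x in Set.Ioi 0, ENNReal.ofReal
      (x * (exp (-t) * (u₀ (α ^ k * x) * (α ^ 2 * t) ^ k / (Nat.factorial k))))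
      = ∫⁻ x in Set.Ioi (0:ℝ), ENNReal.ofReal (x * u₀ x) := by
    rw [tsum_congr (lintegral_Ioi_mul_series_term (zero_lt_one.trans hα) hmeas ht),
      ENNReal.tsum_mul_right, tsum_ofReal_poisson ht, one_mul]
  simp_rw [← tsum_mul_left]
  rw [lintegral_ofReal_tsum (fun k => by fun_prop) (fun k => ?_) (hterms ▸ hfin.ne), hterms]
  filter_upwards [ae_restrict_mem measurableSet_Ioi] with x (hx : 0 < x)
  have hu := hpos (α ^ k * x)
  positivity
end

section
/- Let α > 1, y < 0, and let f : ℝ → ℝ be a continuous function with compact support contained in [−A, −ε] for some 0 < ε < A, and suppose f is continuous at y₀ = −log α with −log α ∈ (−A, −ε). With Ψ(y) = (y/log α) log(−y/log α) − y/log α − 1, the Laplace-method limit holds: lim_{t→∞} √t ∫_{−A}^{−ε} f(y) e^{Ψ(y)t} (−2π(log α) y)^{−1/2} dy = f(−log α) · √(2π/|Ψ''(−log α)|) · (2π(log α)²)^{−1/2} = f(−log α), where Ψ''(−log α) = −1/(log α)² and −2π(log α)(−log α) = 2π(log α)². -/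
open MeasureTheory Real Filter Topology

lemma taylor2_right {f f' f'' : ℝ → ℝ} {a b : ℝ} (hab : a < b)
    (h1 : ∀ x ∈ Set.Icc a b, HasDerivAt f (f' x) x)
    (h2 : ∀ x ∈ Set.Icc a b, HasDerivAt f' (f'' x) x) :
    ∃ ξ ∈ Set.Ioo a b, f b = f a + f' a * (b - a) + f'' ξ / 2 * (b - a) ^ 2 := by
  have hba : (b - a) ^ 2 ≠ 0 := pow_ne_zero _ (sub_ne_zero.2 hab.ne')
  set M : ℝ := (f b - f a - f' a * (b - a)) / (b - a) ^ 2 with hM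
  have hMcancel : M * (b - a) ^ 2 = f b - f a - f' a * (b - a) := div_mul_cancel₀ _ hba
  set g : ℝ → ℝ := fun x => f b - f x - f' x * (b - x) - M * (b - x) ^ 2 with hg
  have hg' : ∀ x ∈ Set.Icc a b, HasDerivAt g ((2 * M - f'' x) * (b - x)) x := by
    intro x hx
    have dbx : HasDerivAt (fun x : ℝ => b - x) (-1) x := (hasDerivAt_id x).const_sub b
    have d1 : HasDerivAt (fun x => f b - f x) (-(f' x)) x := (h1 x hx).const_sub _
    have d2 : HasDerivAt (fun x => f' x * (b - x)) (f'' x * (b - x) + f' x * (-1)) x :=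
      (h2 x hx).mul dbx
    have d3 : HasDerivAt (fun x : ℝ => M * (b - x) ^ 2)
        (M * ((2 : ℕ) * (b - x) ^ 1 * (-1))) x := (dbx.pow 2).const_mul M
    have := (d1.sub d2).sub d3
    refine this.congr_deriv ?_
    push_cast
    ring
  have hgc : ContinuousOn g (Set.Icc a b) :=
    fun x hx => ((hg' x hx).continuousAt).continuousWithinAt
  have hga : g a = 0 := by simp only [hg]; rw [hMcancel]; ring
  have hgb : g b = 0 := by simp [hg]
  obtain ⟨c, hc, hc0⟩ := exists_hasDerivAt_eq_zero hab hgc (by rw [hga, hgb])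
    (fun x hx => hg' x (Set.Ioo_subset_Icc_self hx))
  refine ⟨c, hc, ?_⟩
  have hbc : b - c ≠ 0 := sub_ne_zero.2 hc.2.ne'
  have hMc : f'' c = 2 * M := by
    rcases mul_eq_zero.1 hc0 with h | h
    · linarith [sub_eq_zero.1 h]
    · exact absurd h hbc
  rw [hMc]
  have : 2 * M / 2 * (b - a) ^ 2 = M * (b - a) ^ 2 := by ring
  rw [this, hMcancel]
  ring

lemma taylor2_left {f f' f'' : ℝ → ℝ} {a b : ℝ} (hab : a < b)
    (h1 : ∀ x ∈ Set.Icc a b, HasDerivAt f (f' x) x)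
    (h2 : ∀ x ∈ Set.Icc a b, HasDerivAt f' (f'' x) x) :
    ∃ ξ ∈ Set.Ioo a b, f a = f b + f' b * (a - b) + f'' ξ / 2 * (a - b) ^ 2 := by
  have hba : (a - b) ^ 2 ≠ 0 := pow_ne_zero _ (sub_ne_zero.2 hab.ne)
  set M : ℝ := (f a - f b - f' b * (a - b)) / (a - b) ^ 2 with hM
  have hMcancel : M * (a - b) ^ 2 = f a - f b - f' b * (a - b) := div_mul_cancel₀ _ hba
  set g : ℝ → ℝ := fun x => f a - f x - f' x * (a - x) - M * (a - x) ^ 2 with hg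
  have hg' : ∀ x ∈ Set.Icc a b, HasDerivAt g ((2 * M - f'' x) * (a - x)) x := by
    intro x hx
    have dbx : HasDerivAt (fun x : ℝ => a - x) (-1) x := (hasDerivAt_id x).const_sub a
    have d1 : HasDerivAt (fun x => f a - f x) (-(f' x)) x := (h1 x hx).const_sub _
    have d2 : HasDerivAt (fun x => f' x * (a - x)) (f'' x * (a - x) + f' x * (-1)) x :=
      (h2 x hx).mul dbx
    have d3 : HasDerivAt (fun x : ℝ => M * (a - x) ^ 2)
        (M * ((2 : ℕ) * (a - x) ^ 1 * (-1))) x := (dbx.pow 2).const_mul M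
    have := (d1.sub d2).sub d3
    refine this.congr_deriv ?_
    push_cast
    ring
  have hgc : ContinuousOn g (Set.Icc a b) :=
    fun x hx => ((hg' x hx).continuousAt).continuousWithinAt
  have hgb : g b = 0 := by simp only [hg]; rw [hMcancel]; ring
  have hga : g a = 0 := by simp [hg]
  obtain ⟨c, hc, hc0⟩ := exists_hasDerivAt_eq_zero hab hgc (by rw [hga, hgb])
    (fun x hx => hg' x (Set.Ioo_subset_Icc_self hx))
  refine ⟨c, hc, ?_⟩
  have hbc : a - c ≠ 0 := sub_ne_zero.2 hc.1.ne
  have hMc : f'' c = 2 * M := by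
    rcases mul_eq_zero.1 hc0 with h | h
    · linarith [sub_eq_zero.1 h]
    · exact absurd h hbc
  rw [hMc]
  have : 2 * M / 2 * (a - b) ^ 2 = M * (a - b) ^ 2 := by ring
  rw [this, hMcancel]
  ring

lemma hasDerivAt_log_affine {L y : ℝ} (hL : 0 < L) (hy : y < 0) :
    HasDerivAt (fun y : ℝ => Real.log (-y / L)) (1 / y) y := by
  have hyL : 0 < -y / L := div_pos (neg_pos.2 hy) hL
  have hlin : HasDerivAt (fun y : ℝ => -y / L) (-1 / L) y := by
    simpa using ((hasDerivAt_id y).neg.div_const L)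
  have := (Real.hasDerivAt_log hyL.ne').comp y hlin
  refine this.congr_deriv ?_
  field_simp [hy.ne, hL.ne']

lemma hasDerivAt_Psi {L y : ℝ} (hL : 0 < L) (hy : y < 0) :
    HasDerivAt (fun y : ℝ => y / L * Real.log (-y / L) - y / L - 1)
      (Real.log (-y / L) / L) y := by
  have hq : HasDerivAt (fun y : ℝ => y / L) (1 / L) y := by
    simpa using (hasDerivAt_id y).div_const L
  have hmul := hq.mul (hasDerivAt_log_affine hL hy)
  have := (hmul.sub hq).sub_const 1
  refine this.congr_deriv ?_
  field_simp [hy.ne, hL.ne']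
  ring

lemma hasDerivAt_Psi2 {L y : ℝ} (hL : 0 < L) (hy : y < 0) :
    HasDerivAt (fun y : ℝ => Real.log (-y / L) / L) (1 / (L * y)) y := by
  have := (hasDerivAt_log_affine hL hy).div_const L
  refine this.congr_deriv ?_
  field_simp [hy.ne, hL.ne']

lemma div_le_div_neg' {N c d : ℝ} (hN : 0 ≤ N) (hd : d < 0) (hcd : c ≤ d) :
    N / d ≤ N / c := by
  rw [div_eq_mul_one_div N d, div_eq_mul_one_div N c]
  exact mul_le_mul_of_nonneg_left (one_div_le_one_div_of_neg_of_le hd hcd) hN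

lemma psi_taylor {L A ε : ℝ} (hε : 0 < ε) (hεL : ε < L) (hLA : L < A) :
    ∀ y ∈ Set.Icc (-A) (-ε), ∃ ξ,
      (min y (-L) ≤ ξ ∧ ξ ≤ max y (-L) ∧ ξ < 0) ∧
      y / L * Real.log (-y / L) - y / L - 1 = (y + L) ^ 2 / (2 * L * ξ) := by
  intro y hy
  have hL : 0 < L := hε.trans hεL
  have hy0 : y < 0 := lt_of_le_of_lt hy.2 (by linarith)
  have hL0 : -L < 0 := by linarith
  rcases lt_trichotomy y (-L) with h | h | h
  · have hd : ∀ x ∈ Set.Icc y (-L), x < 0 := fun x hx => lt_of_le_of_lt hx.2 hL0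
    obtain ⟨ξ, hξ, hEq⟩ := taylor2_left h
      (fun x hx => hasDerivAt_Psi hL (hd x hx))
      (fun x hx => hasDerivAt_Psi2 hL (hd x hx))
    refine ⟨ξ, ⟨?_, ?_, ?_⟩, ?_⟩
    · rw [min_eq_left h.le]; exact hξ.1.le
    · rw [max_eq_right h.le]; exact hξ.2.le
    · exact hξ.2.trans hL0
    · have hξ0 : ξ ≠ 0 := (hξ.2.trans hL0).ne
      simp only [neg_neg, div_self hL.ne', Real.log_one] at hEq
      rw [hEq]
      field_simp [hL.ne', hξ0]
      ring
  · refine ⟨-L, ⟨?_, ?_, hL0⟩, ?_⟩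
    · rw [h]; simp
    · rw [h]; simp
    · rw [h]
      simp [neg_div, div_self hL.ne']
  · have hd : ∀ x ∈ Set.Icc (-L) y, x < 0 := fun x hx => lt_of_le_of_lt hx.2 hy0
    obtain ⟨ξ, hξ, hEq⟩ := taylor2_right h
      (fun x hx => hasDerivAt_Psi hL (hd x hx))
      (fun x hx => hasDerivAt_Psi2 hL (hd x hx))
    refine ⟨ξ, ⟨?_, ?_, ?_⟩, ?_⟩
    · rw [min_eq_right h.le]; exact hξ.1.le
    · rw [max_eq_left h.le]; exact hξ.2.le
    · exact hξ.2.trans hy0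
    · have hξ0 : ξ ≠ 0 := (hξ.2.trans hy0).ne
      simp only [neg_neg, div_self hL.ne', Real.log_one] at hEq
      rw [hEq]
      field_simp [hL.ne', hξ0]
      ring

lemma psi_bound {L A ε : ℝ} (hε : 0 < ε) (hεL : ε < L) (hLA : L < A) :
    ∀ y ∈ Set.Icc (-A) (-ε),
      (y + L) ^ 2 / (2 * L * max y (-L)) ≤ y / L * Real.log (-y / L) - y / L - 1 ∧
      y / L * Real.log (-y / L) - y / L - 1 ≤ (y + L) ^ 2 / (2 * L * min y (-L)) := by
  intro y hy
  have hL : 0 < L := hε.trans hεL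
  have hy0 : y < 0 := lt_of_le_of_lt hy.2 (by linarith)
  have hL0 : -L < 0 := by linarith
  obtain ⟨ξ, ⟨hmin, hmax, hξ0⟩, hEq⟩ := psi_taylor hε hεL hLA y hy
  have hN : (0:ℝ) ≤ (y + L) ^ 2 := sq_nonneg _
  have hmax0 : max y (-L) < 0 := max_lt hy0 hL0
  have h2L : (0:ℝ) ≤ 2 * L := by linarith
  rw [hEq]
  constructor
  · exact div_le_div_neg' hN (mul_neg_of_pos_of_neg (by linarith) hmax0)
      (mul_le_mul_of_nonneg_left hmax h2L)
  · exact div_le_div_neg' hN (mul_neg_of_pos_of_neg (by linarith) hξ0)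
      (mul_le_mul_of_nonneg_left hmin h2L)

set_option maxHeartbeats 1000000 in
theorem stmt_18 (α A ε : ℝ) (hα : 1 < α) (hε : 0 < ε) (hεA : ε < A)
    (f : ℝ → ℝ) (hcont : Continuous f)
    (hsupp : Function.support f ⊆ Set.Icc (-A) (-ε))
    (hmem : -Real.log α ∈ Set.Ioo (-A) (-ε)) :
    ∀ Ψ : ℝ → ℝ,
      (Ψ = fun y => y / Real.log α * Real.log (-y / Real.log α) - y / Real.log α - 1) →
      Tendsto (fun t : ℝ => Real.sqrt t *
          ∫ y in (-A)..(-ε),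
            f y * Real.exp (Ψ y * t) / Real.sqrt (-2 * Real.pi * Real.log α * y))
        atTop (nhds (f (-Real.log α))) := by
  intro Ψ hΨ
  subst hΨ
  have hL : 0 < Real.log α := Real.log_pos hα
  set L := Real.log α with hLdef
  obtain ⟨hmA, hmE⟩ := hmem
  have hεL : ε < L := by linarith
  have hLA : L < A := by linarith
  set P : ℝ → ℝ := fun y => y / L * Real.log (-y / L) - y / L - 1 with hPdef
  -- bound on f
  obtain ⟨z, hzmem, hz⟩ := isCompact_Icc.exists_isMaxOn
    (Set.nonempty_Icc.2 (by linarith : (-A:ℝ) ≤ -ε)) (hcont.abs.continuousOn)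
  set Mf := |f z| with hMfdef
  have hMf0 : 0 ≤ Mf := abs_nonneg _
  have hfb : ∀ x, |f x| ≤ Mf := by
    intro x
    by_cases hx : x ∈ Set.Icc (-A) (-ε)
    · exact hz hx
    · have hx0 : f x = 0 := by
        by_contra h
        exact hx (hsupp h)
      rw [hx0, abs_zero]; exact hMf0
  have hA0 : 0 < A := by linarith
  set D : ℝ := Real.sqrt (2 * π * L * ε) with hDdef
  have hD0 : 0 < D :=
    Real.sqrt_pos.2 (mul_pos (mul_pos (mul_pos two_pos Real.pi_pos) hL) hε)
  set D2 : ℝ := Real.sqrt (2 * π * L ^ 2) with hD2def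
  have hD20 : 0 < D2 :=
    Real.sqrt_pos.2 (mul_pos (mul_pos two_pos Real.pi_pos) (pow_pos hL 2))
  set cb : ℝ := 1 / (2 * L * A) with hcbdef
  have hcb0 : 0 < cb := one_div_pos.2 (mul_pos (mul_pos two_pos hL) hA0)
  set c2 : ℝ := 1 / (2 * L ^ 2) with hc2def
  have hc20 : 0 < c2 := one_div_pos.2 (mul_pos two_pos (pow_pos hL 2))
  set inner : ℝ → ℝ → ℝ := fun t s =>
      f (s / Real.sqrt t + -L) * Real.exp (P (s / Real.sqrt t + -L) * t) /
        Real.sqrt (-2 * π * L * (s / Real.sqrt t + -L)) with hinnerdef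
  set F : ℝ → ℝ → ℝ := fun t =>
      (Set.Ioc (Real.sqrt t * (L - A)) (Real.sqrt t * (L - ε))).indicator (inner t) with hFdef
  set G : ℝ → ℝ := fun s => f (-L) * Real.exp (-c2 * s ^ 2) / D2 with hGdef
  set bound : ℝ → ℝ := fun s => Mf * Real.exp (-cb * s ^ 2) / D with hbounddef
  have hsqt : Tendsto Real.sqrt atTop atTop := by
    rw [show Real.sqrt = fun x : ℝ => x ^ (1 / (2:ℝ)) from funext fun x => Real.sqrt_eq_rpow x]
    exact tendsto_rpow_atTop (by norm_num)
  -- dominated convergence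
  have key : Tendsto (fun t => ∫ s, F t s) atTop (𝓝 (∫ s, G s)) := by
    apply tendsto_integral_filter_of_dominated_convergence bound
    · refine Eventually.of_forall fun t => ?_
      have haff : Measurable (fun s : ℝ => s / Real.sqrt t + -L) :=
        (measurable_id.div_const _).add_const _
      have hPm : Measurable P := by
        rw [hPdef]
        exact (((measurable_id.div_const L).mul
          (Real.measurable_log.comp (measurable_neg.div_const L))).sub
            (measurable_id.div_const L)).sub_const 1
      have hm : Measurable (inner t) := by
        rw [hinnerdef]
        exact ((hcont.measurable.comp haff).mul
          (Real.measurable_exp.comp ((hPm.comp haff).mul_const t))).div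
            (Real.continuous_sqrt.measurable.comp (haff.const_mul (-2 * π * L)))
      exact (hm.indicator measurableSet_Ioc).aestronglyMeasurable
    · filter_upwards [eventually_ge_atTop (1:ℝ)] with t ht
      refine Eventually.of_forall fun s => ?_
      have ht0 : (0:ℝ) < t := lt_of_lt_of_le one_pos ht
      have hst : 0 < Real.sqrt t := Real.sqrt_pos.2 ht0
      by_cases hs : s ∈ Set.Ioc (Real.sqrt t * (L - A)) (Real.sqrt t * (L - ε))
      · rw [hFdef]
        simp only [Set.indicator_of_mem hs]
        set y : ℝ := s / Real.sqrt t + -L with hydef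
        have hy1 : -A < y := by
          have h1 : L - A < s / Real.sqrt t := by
            rw [lt_div_iff₀ hst]
            calc (L - A) * Real.sqrt t = Real.sqrt t * (L - A) := by ring
              _ < s := hs.1
          rw [hydef]; linarith
        have hy2 : y ≤ -ε := by
          have h1 : s / Real.sqrt t ≤ L - ε := by
            rw [div_le_iff₀ hst]
            calc s ≤ Real.sqrt t * (L - ε) := hs.2
              _ = (L - ε) * Real.sqrt t := by ring
          rw [hydef]; linarith
        have hymem : y ∈ Set.Icc (-A) (-ε) := ⟨hy1.le, hy2⟩
        have hPy := (psi_bound hε hεL hLA y hymem).2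
        have hmin1 : -A ≤ min y (-L) := le_min hy1.le (by linarith)
        have hmin0 : min y (-L) < 0 := (min_le_left _ _).trans_lt (by linarith : y < 0)
        have h2L : (0:ℝ) ≤ 2 * L := by linarith
        have h1 : (y + L) ^ 2 / (2 * L * min y (-L)) ≤ (y + L) ^ 2 / (2 * L * (-A)) :=
          div_le_div_neg' (sq_nonneg _) (mul_neg_of_pos_of_neg (by linarith) hmin0)
            (mul_le_mul_of_nonneg_left hmin1 h2L)
        have hyL : y + L = s / Real.sqrt t := by rw [hydef]; ring
        have hsq : (y + L) ^ 2 * t = s ^ 2 := by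
          rw [hyL, div_pow, Real.sq_sqrt ht0.le]
          field_simp
        have hexp : P y * t ≤ -cb * s ^ 2 := by
          calc P y * t ≤ (y + L) ^ 2 / (2 * L * (-A)) * t :=
                mul_le_mul_of_nonneg_right (hPy.trans h1) ht0.le
            _ = -cb * s ^ 2 := by
                rw [div_mul_eq_mul_div, hsq, hcbdef]
                field_simp
        have hsqrt : D ≤ Real.sqrt (-2 * π * L * y) := by
          rw [hDdef]
          apply Real.sqrt_le_sqrt
          nlinarith [mul_nonneg (mul_nonneg (mul_nonneg (by norm_num : (0:ℝ) ≤ 2)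
            Real.pi_pos.le) hL.le) (by linarith : (0:ℝ) ≤ -y - ε)]
        rw [hinnerdef]
        simp only [← hydef]
        rw [Real.norm_eq_abs, abs_div, abs_mul, abs_of_pos (Real.exp_pos _),
          abs_of_nonneg (Real.sqrt_nonneg _)]
        exact div_le_div₀ (mul_nonneg hMf0 (Real.exp_pos _).le)
          (mul_le_mul (hfb y) (Real.exp_le_exp.2 hexp) (Real.exp_pos _).le hMf0) hD0 hsqrt
      · rw [hFdef]
        simp only [Set.indicator_of_notMem hs, norm_zero]
        rw [hbounddef]
        exact div_nonneg (mul_nonneg hMf0 (Real.exp_pos _).le) hD0.le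
    · exact ((integrable_exp_neg_mul_sq hcb0).const_mul Mf).div_const D
    · refine Eventually.of_forall fun s => ?_
      have hinv : Tendsto (fun t : ℝ => s / Real.sqrt t) atTop (𝓝 0) :=
        Tendsto.div_atTop tendsto_const_nhds hsqt
      have hyt : Tendsto (fun t : ℝ => s / Real.sqrt t + -L) atTop (𝓝 (-L)) := by
        simpa using hinv.add_const (-L)
      have hIcc : ∀ᶠ t in atTop, (s / Real.sqrt t + -L) ∈ Set.Icc (-A) (-ε) :=
        hyt (Icc_mem_nhds (by linarith) (by linarith))
      have hmemIoc : ∀ᶠ t in atTop,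
          s ∈ Set.Ioc (Real.sqrt t * (L - A)) (Real.sqrt t * (L - ε)) := by
        have hlo : Tendsto (fun t : ℝ => Real.sqrt t * (L - A)) atTop atBot :=
          hsqt.atTop_mul_const_of_neg (by linarith : L - A < 0)
        have hhi : Tendsto (fun t : ℝ => Real.sqrt t * (L - ε)) atTop atTop :=
          hsqt.atTop_mul_const (by linarith : (0:ℝ) < L - ε)
        filter_upwards [hlo.eventually_lt_atBot s, hhi.eventually_ge_atTop s] with t h1 h2
        exact ⟨h1, h2⟩
      have hfy : Tendsto (fun t : ℝ => f (s / Real.sqrt t + -L)) atTop (𝓝 (f (-L))) :=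
        (hcont.tendsto _).comp hyt
      have hsqy : Tendsto (fun t : ℝ => Real.sqrt (-2 * π * L * (s / Real.sqrt t + -L)))
          atTop (𝓝 D2) := by
        have h1 : Tendsto (fun t : ℝ => -2 * π * L * (s / Real.sqrt t + -L)) atTop
            (𝓝 (-2 * π * L * (-L))) := tendsto_const_nhds.mul hyt
        have h2 := (Real.continuous_sqrt.tendsto _).comp h1
        rw [show -2 * π * L * (-L) = 2 * π * L ^ 2 by ring] at h2
        exact h2
      have hexp : Tendsto (fun t : ℝ => Real.exp (P (s / Real.sqrt t + -L) * t)) atTop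
          (𝓝 (Real.exp (-c2 * s ^ 2))) := by
        apply (Real.continuous_exp.tendsto _).comp
        have hlim : ∀ m : ℝ → ℝ, Tendsto m atTop (𝓝 (-L)) → (∀ᶠ t in atTop, m t < 0) →
            Tendsto (fun t => s ^ 2 / (2 * L * m t)) atTop (𝓝 (-c2 * s ^ 2)) := by
          intro m hm _
          have hden : Tendsto (fun t => 2 * L * m t) atTop (𝓝 (2 * L * (-L))) :=
            tendsto_const_nhds.mul hm
          have hne : 2 * L * (-L) ≠ 0 := (mul_neg_of_pos_of_neg (by linarith) (by linarith)).ne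
          have := (tendsto_const_nhds :
            Tendsto (fun _ : ℝ => s ^ 2) atTop (𝓝 (s ^ 2))).div hden hne
          rw [show s ^ 2 / (2 * L * (-L)) = -c2 * s ^ 2 by
            rw [hc2def]; field_simp] at this
          exact this
        have hmax : Tendsto (fun t : ℝ => max (s / Real.sqrt t + -L) (-L)) atTop (𝓝 (-L)) := by
          simpa using hyt.max (tendsto_const_nhds : Tendsto (fun _ : ℝ => -L) atTop (𝓝 (-L)))
        have hmin : Tendsto (fun t : ℝ => min (s / Real.sqrt t + -L) (-L)) atTop (𝓝 (-L)) := by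
          simpa using hyt.min (tendsto_const_nhds : Tendsto (fun _ : ℝ => -L) atTop (𝓝 (-L)))
        have hmaxneg : ∀ᶠ t : ℝ in atTop, max (s / Real.sqrt t + -L) (-L) < 0 := by
          filter_upwards [hIcc] with t h
          exact max_lt (by have := h.2; linarith) (by linarith)
        have hminneg : ∀ᶠ t : ℝ in atTop, min (s / Real.sqrt t + -L) (-L) < 0 := by
          filter_upwards [] with t
          exact (min_le_right _ _).trans_lt (by linarith)
        apply tendsto_of_tendsto_of_tendsto_of_le_of_le'
          (hlim _ hmax hmaxneg) (hlim _ hmin hminneg)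
        · filter_upwards [hIcc, eventually_ge_atTop (1:ℝ)] with t hmemt ht
          have ht0 : (0:ℝ) < t := lt_of_lt_of_le one_pos ht
          have hst : 0 < Real.sqrt t := Real.sqrt_pos.2 ht0
          set y : ℝ := s / Real.sqrt t + -L with hydef
          have hsq : (y + L) ^ 2 * t = s ^ 2 := by
            rw [show y + L = s / Real.sqrt t by rw [hydef]; ring, div_pow,
              Real.sq_sqrt ht0.le]
            field_simp
          have h1 := (psi_bound hε hεL hLA y hmemt).1
          calc s ^ 2 / (2 * L * max y (-L))
              = (y + L) ^ 2 / (2 * L * max y (-L)) * t := by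
                rw [div_mul_eq_mul_div, hsq]
            _ ≤ P y * t := mul_le_mul_of_nonneg_right h1 ht0.le
        · filter_upwards [hIcc, eventually_ge_atTop (1:ℝ)] with t hmemt ht
          have ht0 : (0:ℝ) < t := lt_of_lt_of_le one_pos ht
          have hst : 0 < Real.sqrt t := Real.sqrt_pos.2 ht0
          set y : ℝ := s / Real.sqrt t + -L with hydef
          have hsq : (y + L) ^ 2 * t = s ^ 2 := by
            rw [show y + L = s / Real.sqrt t by rw [hydef]; ring, div_pow,
              Real.sq_sqrt ht0.le]
            field_simp
          have h1 := (psi_bound hε hεL hLA y hmemt).2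
          calc P y * t ≤ (y + L) ^ 2 / (2 * L * min y (-L)) * t :=
                mul_le_mul_of_nonneg_right h1 ht0.le
            _ = s ^ 2 / (2 * L * min y (-L)) := by rw [div_mul_eq_mul_div, hsq]
      have hInner : Tendsto (fun t => inner t s) atTop (𝓝 (G s)) := by
        rw [hinnerdef, hGdef]
        exact (hfy.mul hexp).div hsqy hD20.ne'
      apply Tendsto.congr' _ hInner
      filter_upwards [hmemIoc] with t hmem2
      rw [hFdef]
      simp only [Set.indicator_of_mem hmem2]
  -- compute limit integral
  have hGint : ∫ s, G s = f (-L) := by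
    have hGeq : G = fun s => f (-L) / D2 * Real.exp (-c2 * s ^ 2) := by
      funext s; rw [hGdef]; ring
    rw [hGeq, MeasureTheory.integral_const_mul, integral_gaussian,
      show π / c2 = 2 * π * L ^ 2 by rw [hc2def]; field_simp, ← hD2def]
    field_simp
  rw [hGint] at key
  -- identify the two expressions eventually
  apply Tendsto.congr' _ key
  filter_upwards [eventually_ge_atTop (1:ℝ)] with t ht
  have ht0 : (0:ℝ) < t := lt_of_lt_of_le one_pos ht
  have hst : 0 < Real.sqrt t := Real.sqrt_pos.2 ht0
  have hstne : Real.sqrt t ≠ 0 := hst.ne'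
  have hab : Real.sqrt t * (L - A) ≤ Real.sqrt t * (L - ε) :=
    mul_le_mul_of_nonneg_left (by linarith) hst.le
  have hsub := intervalIntegral.integral_comp_div_add
    (f := fun y => f y * Real.exp (P y * t) / Real.sqrt (-2 * π * L * y))
    (a := Real.sqrt t * (L - A)) (b := Real.sqrt t * (L - ε)) hstne (-L)
  rw [show Real.sqrt t * (L - A) / Real.sqrt t + -L = -A by field_simp; ring,
    show Real.sqrt t * (L - ε) / Real.sqrt t + -L = -ε by field_simp; ring] at hsub
  calc (∫ s, F t s)
      = ∫ s in Set.Ioc (Real.sqrt t * (L - A)) (Real.sqrt t * (L - ε)), inner t s :=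
        integral_indicator measurableSet_Ioc
    _ = ∫ s in (Real.sqrt t * (L - A))..(Real.sqrt t * (L - ε)), inner t s :=
        (intervalIntegral.integral_of_le hab).symm
    _ = Real.sqrt t • ∫ y in (-A)..(-ε),
          f y * Real.exp (P y * t) / Real.sqrt (-2 * π * L * y) := hsub
    _ = Real.sqrt t * ∫ y in (-A)..(-ε),
          f y * Real.exp (P y * t) / Real.sqrt (-2 * π * L * y) := by rw [smul_eq_mul]
end

section
/- Let α > 1, k ∈ ℤ \ {0}, and let f : [−A, −ε] → ℂ be continuously differentiable (0 < ε < A). Then ∫_{−A}^{−ε} f(y) e^{(Ψ(y) + (2ikπ/log α) y) t} dy → 0 as t → ∞, and moreover √t · ∫_{−A}^{−ε} f(y) e^{(Ψ(y) + (2ikπ/log α) y) t} dy → 0, where Ψ(y) = (y/log α) log(−y/log α) − y/log α − 1. -/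
open MeasureTheory Real Filter Complex

open Set Asymptotics

/-!
Write the exponent as `t φ` with `φ y = Ψ y + c y`, where `c = 2πik / log α` is purely imaginary
and nonzero. Then `Re φ = Ψ ≤ 0`, so `|e^{tφ}| ≤ 1` for `t ≥ 0`, and `φ' = Ψ' + c` has imaginary
part `Im c ≠ 0`, so `φ` has no stationary point at all. Integrating by parts against
`f / φ'` (a `C¹` function) gives `t ∫ f e^{tφ} = [f/φ' · e^{tφ}] - ∫ (f/φ')' e^{tφ}`, which is
bounded; so the integral is `O(1/t)`, and `√t · O(1/t) → 0`.
-/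

theorem norm_cexp_mul_ofReal_le_one {z : ℂ} {t : ℝ} (hz : z.re ≤ 0) (ht : 0 ≤ t) :
    ‖cexp (z * t)‖ ≤ 1 := by
  rw [norm_exp, Real.exp_le_one_iff, re_mul_ofReal]
  exact mul_nonpos_of_nonpos_of_nonneg hz ht

section NonstationaryPhase

variable {a b : ℝ} {f g φ : ℝ → ℂ}

theorem ofReal_mul_integral_mul_derivWithin_mul_cexp (hab : a < b)
    (hg : ContDiffOn ℝ 1 g (Icc a b)) (hφ : ContDiffOn ℝ 1 φ (Icc a b)) (t : ℝ) :
    (t : ℂ) * ∫ y in a..b, g y * derivWithin φ (Icc a b) y * cexp (φ y * t) =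
      g b * cexp (φ b * t) - g a * cexp (φ a * t) -
        ∫ y in a..b, derivWithin g (Icc a b) y * cexp (φ y * t) := by
  have hS : uIcc a b = Icc a b := uIcc_of_le hab.le
  have hU : UniqueDiffOn ℝ (Icc a b) := uniqueDiffOn_Icc hab
  have hφ'_cont := hφ.continuousOn_derivWithin hU le_rfl
  have hcexp : ContinuousOn (fun y => cexp (φ y * t)) (Icc a b) :=
    continuous_exp.comp_continuousOn (hφ.continuousOn.mul continuousOn_const)
  have hparts := intervalIntegral.integral_mul_deriv_eq_deriv_mul_of_hasDerivWithinAt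
    (u := g) (u' := derivWithin g (Icc a b)) (v := fun y => cexp (φ y * t))
    (v' := fun y => cexp (φ y * t) * (derivWithin φ (Icc a b) y * t))
    (fun y hy => by
      rw [hS] at hy ⊢
      exact (hg.differentiableOn one_ne_zero y hy).hasDerivWithinAt)
    (fun y hy => by
      rw [hS] at hy ⊢
      exact ((hφ.differentiableOn one_ne_zero y hy).hasDerivWithinAt.mul_const (t : ℂ)).cexp)
    ((hg.continuousOn_derivWithin hU le_rfl).intervalIntegrable_of_Icc hab.le)
    ((hcexp.mul (hφ'_cont.mul continuousOn_const)).intervalIntegrable_of_Icc hab.le)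
  rw [← hparts, ← intervalIntegral.integral_const_mul]
  exact intervalIntegral.integral_congr fun y _ => by ring

theorem norm_ofReal_mul_integral_mul_derivWithin_mul_cexp_le (hab : a < b)
    (hg : ContDiffOn ℝ 1 g (Icc a b)) (hφ : ContDiffOn ℝ 1 φ (Icc a b))
    (hre : ∀ y ∈ Icc a b, (φ y).re ≤ 0) {t : ℝ} (ht : 0 ≤ t) :
    ‖(t : ℂ) * ∫ y in a..b, g y * derivWithin φ (Icc a b) y * cexp (φ y * t)‖ ≤
      ‖g b‖ + ‖g a‖ + ∫ y in a..b, ‖derivWithin g (Icc a b) y‖ := by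
  have hE : ∀ y ∈ Icc a b, ‖cexp (φ y * t)‖ ≤ 1 := fun y hy =>
    norm_cexp_mul_ofReal_le_one (hre y hy) ht
  have hmul : ∀ y ∈ Icc a b, ∀ u : ℂ, ‖u * cexp (φ y * t)‖ ≤ ‖u‖ := fun y hy u => by
    simpa [norm_mul] using mul_le_mul_of_nonneg_left (hE y hy) (norm_nonneg u)
  have hint : ‖∫ y in a..b, derivWithin g (Icc a b) y * cexp (φ y * t)‖ ≤
      ∫ y in a..b, ‖derivWithin g (Icc a b) y‖ :=
    intervalIntegral.norm_integral_le_of_norm_le hab.le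
      (Eventually.of_forall fun y hy => hmul y (Ioc_subset_Icc_self hy) _)
      ((hg.continuousOn_derivWithin (uniqueDiffOn_Icc hab) le_rfl).norm.intervalIntegrable_of_Icc
        hab.le)
  rw [ofReal_mul_integral_mul_derivWithin_mul_cexp hab hg hφ]
  calc _ ≤ ‖g b * cexp (φ b * t)‖ + ‖g a * cexp (φ a * t)‖ +
        ‖∫ y in a..b, derivWithin g (Icc a b) y * cexp (φ y * t)‖ :=
      (norm_sub_le _ _).trans (by gcongr; exact norm_sub_le _ _)
    _ ≤ _ := by
      gcongr
      · exact hmul b (right_mem_Icc.2 hab.le) _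
      · exact hmul a (left_mem_Icc.2 hab.le) _

theorem isBigO_integral_mul_cexp_mul_ofReal (hab : a < b)
    (hf : ContDiffOn ℝ 1 f (Icc a b)) (hφ : ContDiffOn ℝ 2 φ (Icc a b))
    (hφ' : ∀ y ∈ Icc a b, derivWithin φ (Icc a b) y ≠ 0)
    (hre : ∀ y ∈ Icc a b, (φ y).re ≤ 0) :
    (fun t : ℝ => ∫ y in a..b, f y * cexp (φ y * t)) =O[atTop] fun t => t⁻¹ := by
  set g := fun y => f y * (derivWithin φ (Icc a b) y)⁻¹
  have hg : ContDiffOn ℝ 1 g (Icc a b) :=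
    hf.mul ((hφ.derivWithin (uniqueDiffOn_Icc hab) le_rfl).inv hφ')
  have hfg : ∀ t : ℝ, ∫ y in a..b, f y * cexp (φ y * t) =
      ∫ y in a..b, g y * derivWithin φ (Icc a b) y * cexp (φ y * t) :=
    fun t => intervalIntegral.integral_congr fun y hy => by
      rw [uIcc_of_le hab.le] at hy
      simp only [g, inv_mul_cancel_right₀ (hφ' y hy)]
  refine IsBigO.of_bound (‖g b‖ + ‖g a‖ + ∫ y in a..b, ‖derivWithin g (Icc a b) y‖) ?_
  filter_upwards [eventually_gt_atTop 0] with t ht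
  have hbound := norm_ofReal_mul_integral_mul_derivWithin_mul_cexp_le hab hg
    (hφ.of_le (by norm_num)) hre ht.le
  rw [norm_mul, norm_real, Real.norm_of_nonneg ht.le, ← hfg] at hbound
  rw [norm_inv, Real.norm_of_nonneg ht.le, ← div_eq_mul_inv, le_div_iff₀ ht, mul_comm]
  exact hbound

theorem isBigO_integral_mul_cexp_ofReal_add_mul {ψ : ℝ → ℝ} {c : ℂ} (hab : a < b)
    (hf : ContDiffOn ℝ 1 f (Icc a b)) (hψ : ContDiffOn ℝ 2 ψ (Icc a b))
    (hψ_nonpos : ∀ y ∈ Icc a b, ψ y ≤ 0) (hc_re : c.re = 0) (hc_im : c.im ≠ 0) :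
    (fun t : ℝ => ∫ y in a..b, f y * cexp (((ψ y : ℂ) + c * y) * t)) =O[atTop]
      fun t => t⁻¹ := by
  refine isBigO_integral_mul_cexp_mul_ofReal hab hf
    ((ofRealCLM.contDiff.comp_contDiffOn hψ).add
      (contDiff_const.mul ofRealCLM.contDiff).contDiffOn) (fun y hy => ?_)
    (fun y hy => by simpa [hc_re] using hψ_nonpos y hy)
  have hderiv : HasDerivWithinAt (fun y : ℝ => (ψ y : ℂ) + c * y)
      (derivWithin ψ (Icc a b) y + c * 1) (Icc a b) y :=
    (hψ.differentiableOn (by norm_num) y hy).hasDerivWithinAt.ofReal_comp.add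
      ((hasDerivAt_id y).ofReal_comp.const_mul c).hasDerivWithinAt
  rw [hderiv.derivWithin (uniqueDiffOn_Icc hab y hy)]
  intro h
  apply hc_im
  simpa using congrArg im h

end NonstationaryPhase

theorem tendsto_ofReal_sqrt_mul_of_isBigO_inv {u : ℝ → ℂ} (hu : u =O[atTop] fun t => t⁻¹) :
    Tendsto (fun t : ℝ => (√t : ℂ) * u t) atTop (nhds 0) := by
  have hsqrt : (fun t : ℝ => (√t : ℂ)) =O[atTop] fun t => √t :=
    isBigO_ofReal_left.2 (isBigO_refl _ _)
  refine (hsqrt.mul hu).trans_tendsto ?_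
  have hinv : Tendsto (fun t : ℝ => (√t)⁻¹) atTop (nhds 0) :=
    tendsto_inv_atTop_zero.comp tendsto_sqrt_atTop
  refine hinv.congr fun t => ?_
  rw [← div_eq_mul_inv, sqrt_div_self', one_div]

theorem div_mul_log_neg_div_sub_div_sub_one_nonpos {L y : ℝ} (hL : 0 < L) (hy : y < 0) :
    y / L * Real.log (-y / L) - y / L - 1 ≤ 0 := by
  have hu : 0 ≤ -y / L := div_nonneg (by linarith) hL.le
  have hyL : y / L = -(-y / L) := by ring
  rw [hyL]
  linarith [self_sub_one_le_mul_log hu]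

theorem contDiffOn_div_mul_log_neg_div_sub_div_sub_one {L : ℝ} (hL : L ≠ 0) {n : WithTop ℕ∞} :
    ContDiffOn ℝ n (fun y => y / L * Real.log (-y / L) - y / L - 1) (Iio 0) := by
  have hlog : ContDiffOn ℝ n (fun y : ℝ => Real.log (-y / L)) (Iio 0) :=
    (contDiff_id.neg.div_const L).contDiffOn.log fun y hy =>
      div_ne_zero (neg_ne_zero.2 (ne_of_lt hy)) hL
  exact (((contDiff_id.div_const L).contDiffOn.mul hlog).sub
    (contDiff_id.div_const L).contDiffOn).sub contDiffOn_const

theorem stmt_19 (α A ε : ℝ) (hα : 1 < α) (hε : 0 < ε) (hεA : ε < A)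
    (k : ℤ) (hk : k ≠ 0)
    (f : ℝ → ℂ) (hf : ContDiffOn ℝ 1 f (Set.Icc (-A) (-ε))) :
    ∀ Ψ : ℝ → ℝ,
      (Ψ = fun y => y / Real.log α * Real.log (-y / Real.log α) - y / Real.log α - 1) →
      (Tendsto (fun t : ℝ =>
            ∫ y in (-A)..(-ε),
              f y * Complex.exp (((Ψ y : ℂ) +
                2 * Real.pi * Complex.I * (k : ℂ) / (Real.log α : ℂ) * (y : ℂ)) * (t : ℂ)))
          atTop (nhds 0) ∧
       Tendsto (fun t : ℝ => (Real.sqrt t : ℂ) *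
            ∫ y in (-A)..(-ε),
              f y * Complex.exp (((Ψ y : ℂ) +
                2 * Real.pi * Complex.I * (k : ℂ) / (Real.log α : ℂ) * (y : ℂ)) * (t : ℂ)))
          atTop (nhds 0)) := by
  rintro Ψ rfl
  have hL : 0 < Real.log α := Real.log_pos hα
  have hneg : Icc (-A) (-ε) ⊆ Iio 0 := fun y hy => by simp only [mem_Iio]; linarith [hy.2]
  have hbigO := isBigO_integral_mul_cexp_ofReal_add_mul (by linarith) hf
    ((contDiffOn_div_mul_log_neg_div_sub_div_sub_one hL.ne').mono hneg) (fun y hy => div_mul_log_neg_div_sub_div_sub_one_nonpos hL (hneg hy))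
    (c := 2 * Real.pi * Complex.I * (k : ℂ) / (Real.log α : ℂ)) (by simp)
    (by simp [hk, Real.pi_ne_zero, hL.ne'])
  exact ⟨hbigO.trans_tendsto tendsto_inv_atTop_zero, tendsto_ofReal_sqrt_mul_of_isBigO_inv hbigO⟩
end
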